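/- arXiv:2203.01527 — 5 statements merged into one kernel-verified Lean document; each statement's English description precedes it below -/
import Mathlib

section
/- Let M be a binary matroid with standard matrix representation A over GF(2), and let T ⊆ E(M). If y ∈ T, then deleting y from the splitting matroid equals splitting the deletion with respect to T \ {y}: (M_T) \ y = (M \ y)_{T \ {y}}. -/
open scoped Classical

namespace PaperSplit

variable {α β : Type}

/-- `A` is a matrix representation (columns indexed by `α`, rows by `η`) of the
matroid `M` over `GF(2)`, with ground set `E`. -/
def RepresentsOn {η : Type} (A : α → η → ZMod 2) (E : Set α) (M : Matroid α) : Prop :=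
  M.E = E ∧ ∀ I ⊆ E, (M.Indep I ↔ LinearIndependent (ZMod 2) (fun i : I => A i.1))

/-- The columns of the matrix `A_T`: one extra row (indexed by `none`) is appended,
with entry `1` exactly in the columns of `T`. -/
noncomputable def splitCols {η : Type} (A : α → η → ZMod 2) (T : Set α) :
    α → Option η → ZMod 2 :=
  fun a o => Option.elim o (if a ∈ T then 1 else 0) (A a)

/-- `MT` is the splitting matroid of `M` with respect to `T`. -/
def IsSplitting (M : Matroid α) (T : Set α) (MT : Matroid α) : Prop :=
  ∃ (η : Type) (A : α → η → ZMod 2),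
    RepresentsOn A M.E M ∧ RepresentsOn (splitCols A T) M.E MT

/-- `M` is a binary matroid. -/
def IsBinary (M : Matroid α) : Prop :=
  ∃ (η : Type) (A : α → η → ZMod 2), RepresentsOn A M.E M

/-- Deletion of a set of elements. -/
def del (M : Matroid α) (D : Set α) : Matroid α := M.restrict (M.E \ D)

/-- Contraction of a set of elements. -/
def con (M : Matroid α) (C : Set α) : Matroid α := (del M.dual C).dual

/-- `N` is a minor of `M`. -/
def IsMinorOf (N M : Matroid α) : Prop := ∃ X Y, Disjoint X Y ∧ N = con (del M X) Y

/-- `C` is a circuit (minimal dependent set) of `M`. -/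
def circuit (M : Matroid α) (C : Set α) : Prop :=
  C ⊆ M.E ∧ ¬ M.Indep C ∧ ∀ D ⊂ C, M.Indep D

/-- `C` is a cocircuit of `M`, i.e. a circuit of the dual. -/
def cocircuit (M : Matroid α) (C : Set α) : Prop := circuit M.dual C

def isLoop (M : Matroid α) (e : α) : Prop := circuit M {e}

def isColoop (M : Matroid α) (e : α) : Prop := isLoop M.dual e

/-- Matroid isomorphism. -/
def MIso (M : Matroid α) (N : Matroid β) : Prop :=
  ∃ e : M.E ≃ N.E, ∀ I : Set M.E,
    M.Indep (Subtype.val '' I) ↔ N.Indep (Subtype.val '' (e '' I))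

/-- A graphic matroid: one represented over `GF(2)` by a vertex–edge incidence
matrix (each column is zero or the sum of two distinct standard basis vectors). -/
def IsGraphic (M : Matroid α) : Prop :=
  ∃ (V : Type) (A : α → V → ZMod 2), RepresentsOn A M.E M ∧
    ∀ a ∈ M.E, A a = 0 ∨ ∃ u v : V, u ≠ v ∧
      A a = fun w => (if w = u then (1 : ZMod 2) else 0) + (if w = v then 1 else 0)

def IsCographic (M : Matroid α) : Prop := IsGraphic M.dual

/-- A multigraph with vertex type `V` and edge type `E`. -/
structure Multigraph (V E : Type) where
  ends : E → Sym2 V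

/-- The mod-2 vertex–edge incidence matrix of a multigraph. -/
noncomputable def Multigraph.inc {V E : Type} (G : Multigraph V E) : E → V → ZMod 2 :=
  fun e v => if G.ends e = Sym2.mk v v then 0 else if v ∈ G.ends e then 1 else 0

/-- `M` is the cycle matroid of the multigraph `G`. -/
def IsCycleMatroidOf {V E : Type} (G : Multigraph V E) (M : Matroid E) : Prop :=
  RepresentsOn G.inc Set.univ M

def Multigraph.Adj {V E : Type} (G : Multigraph V E) (u v : V) : Prop :=
  ∃ e, G.ends e = Sym2.mk u v

def Multigraph.Connected {V E : Type} (G : Multigraph V E) : Prop :=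
  Nonempty V ∧ ∀ u v : V, Relation.ReflTransGen G.Adj u v

noncomputable def Multigraph.degree {V E : Type} (G : Multigraph V E) (v : V) : ℕ :=
  Nat.card {e | v ∈ G.ends e ∧ ¬ (G.ends e).IsDiag} +
    2 * Nat.card {e | G.ends e = Sym2.mk v v}

def Multigraph.Eulerian {V E : Type} (G : Multigraph V E) : Prop :=
  G.Connected ∧ ∀ v, Even (G.degree v)

/-- The Fano matroid `F₇`: represented over `GF(2)` by the seven distinct
nonzero vectors of `GF(2)³`. -/
def IsFano (M : Matroid (Fin 7)) : Prop :=
  ∃ A : Fin 7 → Fin 3 → ZMod 2, RepresentsOn A Set.univ M ∧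
    Function.Injective A ∧ ∀ i, A i ≠ 0

/-- The complete graph `K₅` as a multigraph. -/
def K5 : Multigraph (Fin 5) {p : Sym2 (Fin 5) // ¬ p.IsDiag} := ⟨fun e => e.1⟩

/-- The complete bipartite graph `K₃,₃` as a multigraph. -/
def K33 : Multigraph (Fin 3 ⊕ Fin 3) (Fin 3 × Fin 3) :=
  ⟨fun e => Sym2.mk (Sum.inl e.1) (Sum.inr e.2)⟩

theorem RepresentsOn.del {η : Type} {A : α → η → ZMod 2} {E : Set α} {M : Matroid α}
    (hM : RepresentsOn A E M) (D : Set α) : RepresentsOn A (E \ D) (del M D) := by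
  refine ⟨by simp [PaperSplit.del, hM.1], fun I hI => ?_⟩
  rw [PaperSplit.del, Matroid.restrict_indep_iff, hM.1, hM.2 I (hI.trans Set.sdiff_subset)]
  exact and_iff_left hI

theorem RepresentsOn.eq_of_eqOn {η : Type} {A B : α → η → ZMod 2} {E : Set α}
    {M N : Matroid α} (hM : RepresentsOn A E M) (hN : RepresentsOn B E N)
    (hAB : Set.EqOn A B E) : M = N := by
  refine Matroid.ext_indep (hM.1.trans hN.1.symm) fun I hI => ?_
  rw [hM.1] at hI
  have hcols : (fun i : I => A i.1) = fun i => B i.1 := funext fun i => hAB (hI i.2)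
  rw [hM.2 I hI, hN.2 I hI, hcols]

theorem splitCols_diff_singleton_of_ne {η : Type} (A : α → η → ZMod 2) (T : Set α) {a y : α}
    (h : a ≠ y) : splitCols A (T \ {y}) a = splitCols A T a := by
  funext o
  cases o <;> simp [splitCols, h]

theorem splitting_delete_in_T_general {α η : Type} (MT NT : Matroid α)
    (A : α → η → ZMod 2) (T : Set α) (y : α)
    (hMT : RepresentsOn (splitCols A T) Set.univ MT)
    (hNT : RepresentsOn (splitCols A (T \ {y})) (Set.univ \ {y}) NT) :
    del MT {y} = NT :=
  (hMT.del {y}).eq_of_eqOn hNT fun _ ha => (splitCols_diff_singleton_of_ne A T ha.2).symm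

/-- For `y ∈ T`, `(M_T) \ y = (M \ y)_{T \ {y}}`. -/
theorem splitting_delete_in_T {α η : Type} (M MT N NT : Matroid α)
    (A : α → η → ZMod 2) (T : Set α) (y : α)
    (hM : RepresentsOn A Set.univ M) (hT : T ⊆ M.E) (hy : y ∈ T)
    (hMT : RepresentsOn (splitCols A T) Set.univ MT)
    (hN : N = del M {y})
    (hNT : RepresentsOn (splitCols A (T \ {y})) (Set.univ \ {y}) NT) :
    del MT {y} = NT :=
  splitting_delete_in_T_general MT NT A T y hMT hNT

end PaperSplit
end

section
/- Let M be a binary matroid and T ⊆ E(M). Then deleting all of T from the splitting matroid gives the same matroid as deleting T from M: M_T \ T = M \ T. -/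
open scoped Classical

namespace PaperSplit

variable {α β : Type}

section Splitting

variable {η : Type} (A : α → η → ZMod 2) (T : Set α)

lemma splitCols_eq_extendByZero_of_notMem {a : α} (ha : a ∉ T) :
    splitCols A T a = Function.ExtendByZero.linearMap (ZMod 2) some (A a) := by
  funext o
  cases o with
  | none => simp [splitCols, ha, Function.extend_apply']
  | some j => simp [splitCols, (Option.some_injective η).extend_apply]

lemma linearIndependent_splitCols_iff {I : Set α} (hI : Disjoint I T) :
    LinearIndependent (ZMod 2) (fun i : I => splitCols A T i) ↔
      LinearIndependent (ZMod 2) (fun i : I => A i) := by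
  have hcols : (fun i : I => splitCols A T i) =
      Function.ExtendByZero.linearMap (ZMod 2) some ∘ fun i : I => A i :=
    funext fun i => splitCols_eq_extendByZero_of_notMem A T (hI.notMem_of_mem_left i.2)
  rw [hcols, LinearMap.linearIndependent_iff]
  exact LinearMap.ker_eq_bot.mpr (Function.extend_injective (Option.some_injective η) 0)

end Splitting

theorem splitting_delete_T_general {α η : Type} (M MT : Matroid α)
    (A : α → η → ZMod 2) (T : Set α)
    (hM : RepresentsOn A Set.univ M)
    (hMT : RepresentsOn (splitCols A T) Set.univ MT) :
    del MT T = del M T := by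
  refine Matroid.ext_indep (by simp [del, hM.1, hMT.1]) fun I hI => ?_
  have hIT : Disjoint I T := by
    simp only [del, Matroid.restrict_ground_eq, hMT.1] at hI
    exact Set.subset_compl_iff_disjoint_right.mp fun a ha => (hI ha).2
  simp only [del, Matroid.restrict_indep_iff, hM.1, hMT.1]
  rw [hM.2 I (Set.subset_univ I), hMT.2 I (Set.subset_univ I),
    linearIndependent_splitCols_iff A T hIT]

/-- `M_T \ T = M \ T`. -/
theorem splitting_delete_T {α η : Type} (M MT : Matroid α)
    (A : α → η → ZMod 2) (T : Set α)
    (hM : RepresentsOn A Set.univ M) (hT : T ⊆ M.E)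
    (hMT : RepresentsOn (splitCols A T) Set.univ MT) :
    del MT T = del M T :=
  splitting_delete_T_general M MT A T hM hMT

end PaperSplit
end

section
/- Every circuit of the splitting matroid M_T is either a circuit of M meeting T in an even number of elements or a disjoint union of two circuits of M each meeting T in an odd number of elements. -/
open scoped Classical

namespace PaperSplit

variable {α β : Type}

lemma zmod2_ne_zero {c : ZMod 2} (h : c ≠ 0) : c = 1 := by
  have : ∀ c : ZMod 2, c ≠ 0 → c = 1 := by decide
  exact this c h

lemma dep_of_sum_zero {W : Type*} [AddCommGroup W] [Module (ZMod 2) W]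
    (f : α → W) (s : Finset α) (hs : s.Nonempty) (h : ∑ a ∈ s, f a = 0)
    (S : Set α) (hsS : ↑s ⊆ S) :
    ¬ LinearIndependent (ZMod 2) (fun i : S => f i.1) := by
  intro hLI
  have hLI' : LinearIndependent (ZMod 2) (f ∘ (Subtype.val : S → α)) := hLI
  rw [linearIndependent_comp_subtype_iff, linearIndepOn_iff] at hLI'
  classical
  set l : α →₀ ZMod 2 := ∑ a ∈ s, Finsupp.single a 1 with hl
  have hsupp : ∀ a, l a = if a ∈ s then 1 else 0 := by
    intro a
    rw [hl, Finsupp.finset_sum_apply]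
    by_cases ha : a ∈ s
    · rw [Finset.sum_eq_single a (fun b _ hb => Finsupp.single_eq_of_ne' hb)
        (fun h' => absurd ha h'), Finsupp.single_eq_same, if_pos ha]
    · rw [if_neg ha, Finset.sum_eq_zero]
      intro b hb
      exact Finsupp.single_eq_of_ne' (fun hba => ha (hba ▸ hb))
  have hmem : l ∈ Finsupp.supported (ZMod 2) (ZMod 2) S := by
    rw [Finsupp.mem_supported]
    intro a ha
    rw [Finset.mem_coe, Finsupp.mem_support_iff, hsupp] at ha
    by_cases h' : a ∈ s
    · exact hsS h'
    · simp [h'] at ha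
  have hcomb : Finsupp.linearCombination (ZMod 2) f l = 0 := by
    rw [hl, map_sum]
    simpa using h
  have := hLI' l hmem hcomb
  obtain ⟨a, ha⟩ := hs
  have : l a = 0 := by rw [this]; rfl
  rw [hsupp, if_pos ha] at this
  exact one_ne_zero this

lemma sum_zero_of_dep' {W : Type*} [AddCommGroup W] [Module (ZMod 2) W]
    (f : α → W) (S : Set α)
    (h : ¬ LinearIndependent (ZMod 2) (fun i : S => f i.1)) :
    ∃ s : Finset α, ↑s ⊆ S ∧ s.Nonempty ∧ ∑ a ∈ s, f a = 0 := by
  have h' : ¬ LinearIndependent (ZMod 2) (f ∘ (Subtype.val : S → α)) := h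
  rw [linearIndependent_comp_subtype_iff, linearDepOn_iff'] at h'
  obtain ⟨l, hmem, hcomb, hne⟩ := h'
  refine ⟨l.support, (Finsupp.mem_supported _ _).mp hmem,
    Finsupp.support_nonempty_iff.mpr hne, ?_⟩
  rw [Finsupp.linearCombination_apply, Finsupp.sum] at hcomb
  rw [← hcomb]
  apply Finset.sum_congr rfl
  intro a ha
  rw [zmod2_ne_zero (Finsupp.mem_support_iff.mp ha), one_smul]

lemma coe_fin (s : Finset α) : (Set.toFinite (↑s : Set α)).toFinset = s := by
  ext a; simp

lemma sdiff_sum [Fintype α] {W : Type*} [AddCommGroup W] (f : α → W)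
    {S1 S2 : Set α} (h : S2 ⊆ S1) :
    ∑ a ∈ (Set.toFinite (S1 \ S2)).toFinset, f a
      = ∑ a ∈ (Set.toFinite S1).toFinset, f a
        - ∑ a ∈ (Set.toFinite S2).toFinset, f a := by
  have h1 : (Set.toFinite (S1 \ S2)).toFinset
      = (Set.toFinite S1).toFinset \ (Set.toFinite S2).toFinset := by
    ext a
    simp only [Set.Finite.mem_toFinset, Finset.mem_sdiff]
    exact Iff.rfl
  rw [h1, eq_sub_iff_add_eq, Finset.sum_sdiff]
  intro a ha
  simp only [Set.Finite.mem_toFinset] at ha ⊢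
  exact h ha

lemma even_iff_cast (n : ℕ) : Even n ↔ ((n : ZMod 2) = 0) := by
  rw [ZMod.natCast_eq_zero_iff]
  exact ⟨fun ⟨k, hk⟩ => ⟨k, by omega⟩, fun ⟨k, hk⟩ => ⟨k, by omega⟩⟩

lemma odd_of_cast_one {n : ℕ} (h : (n : ZMod 2) = 1) : Odd n := by
  rw [Nat.not_even_iff_odd.symm, even_iff_cast, h]
  exact one_ne_zero

/-- Every circuit of `M_T` is either a circuit of `M` meeting `T`
in an even number of elements, or a disjoint union of two circuits of `M`,
each meeting `T` in an odd number of elements. -/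
theorem splitting_circuits {α η : Type} [Fintype α] (M MT : Matroid α)
    (A : α → η → ZMod 2) (T : Set α)
    (hM : RepresentsOn A Set.univ M) (hT : T ⊆ M.E)
    (hMT : RepresentsOn (splitCols A T) Set.univ MT) :
    ∀ C, circuit MT C →
      (circuit M C ∧ Even ((C ∩ T).ncard)) ∨
      (∃ C₁ C₂, circuit M C₁ ∧ circuit M C₂ ∧ Disjoint C₁ C₂ ∧ C = C₁ ∪ C₂ ∧
        Odd ((C₁ ∩ T).ncard) ∧ Odd ((C₂ ∩ T).ncard)) := by
  classical
  set χ : α → ZMod 2 := fun a => if a ∈ T then 1 else 0 with hχdef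
  have hsplit : ∀ s : Finset α, (∑ a ∈ s, splitCols A T a = 0) ↔
      ((∑ a ∈ s, A a = 0) ∧ ∑ a ∈ s, χ a = 0) := by
    intro s
    constructor
    · intro h
      constructor
      · funext i
        have := congrFun h (some i)
        rw [Finset.sum_apply] at this
        simpa [splitCols] using this
      · have := congrFun h none
        rw [Finset.sum_apply] at this
        simpa [splitCols, hχdef] using this
    · rintro ⟨h1, h2⟩
      funext o
      rw [Finset.sum_apply]
      cases o with
      | none => simpa [splitCols, hχdef] using h2
      | some i => simpa [splitCols] using congrFun h1 i
  have hpar : ∀ S : Set α,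
      (∑ a ∈ (Set.toFinite S).toFinset, χ a) = (((S ∩ T).ncard : ZMod 2)) := by
    intro S
    have h1 : (S ∩ T).ncard = ((Set.toFinite S).toFinset.filter (· ∈ T)).card := by
      rw [Set.ncard_eq_toFinset_card _ (Set.toFinite _)]
      congr 1
      ext a
      simp only [Set.Finite.mem_toFinset, Finset.mem_filter]
      exact Iff.rfl
    rw [h1, hχdef]
    simp [Finset.sum_boole]
  intro C hC
  obtain ⟨hCE, hCdep, hCmin⟩ := hC
  have hCne : C.Nonempty := by
    rcases C.eq_empty_or_nonempty with h | h
    · exfalso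
      apply hCdep
      rw [h, hMT.2 ∅ (Set.empty_subset _)]
      exact linearIndependent_empty_type
    · exact h
  have hCsum : ∑ a ∈ (Set.toFinite C).toFinset, splitCols A T a = 0 := by
    have hdep : ¬ LinearIndependent (ZMod 2) (fun i : C => splitCols A T i.1) := by
      intro h
      exact hCdep ((hMT.2 C (Set.subset_univ _)).mpr h)
    obtain ⟨s, hsC, hsne, hs0⟩ := sum_zero_of_dep' (splitCols A T) C hdep
    have hnotssub : ¬ (↑s : Set α) ⊂ C := by
      intro hss
      have hind := hCmin _ hss
      rw [hMT.2 _ (Set.subset_univ _)] at hind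
      exact dep_of_sum_zero (splitCols A T) s hsne hs0 _ subset_rfl hind
    have heq : (↑s : Set α) = C := hsC.ssubset_or_eq.resolve_left hnotssub
    have hfin : (Set.toFinite C).toFinset = s := by
      rw [← heq]
      exact coe_fin s
    rw [hfin]
    exact hs0
  obtain ⟨hA0, hχ0⟩ := (hsplit (Set.toFinite C).toFinset).mp hCsum
  have hodd : ∀ S : Set α, S ⊂ C → S.Nonempty →
      (∑ a ∈ (Set.toFinite S).toFinset, A a = 0) →
      (∑ a ∈ (Set.toFinite S).toFinset, χ a) = 1 := by
    intro S hSC hSne hSsum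
    apply zmod2_ne_zero
    intro hzero
    have hsum0 : ∑ a ∈ (Set.toFinite S).toFinset, splitCols A T a = 0 :=
      (hsplit (Set.toFinite S).toFinset).mpr ⟨hSsum, hzero⟩
    have hind := hCmin S hSC
    rw [hMT.2 _ (Set.subset_univ _)] at hind
    exact dep_of_sum_zero (splitCols A T) (Set.toFinite S).toFinset
      ((Set.Finite.toFinset_nonempty _).mpr hSne) hsum0 S
      (by rw [Set.Finite.coe_toFinset]) hind
  have hcircS : ∀ S : Set α, S ⊂ C → S.Nonempty →
      (∑ a ∈ (Set.toFinite S).toFinset, A a = 0) → circuit M S := by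
    intro S hSC hSne hSsum
    refine ⟨by rw [hM.1]; exact Set.subset_univ _, ?_, ?_⟩
    · intro h
      rw [hM.2 _ (Set.subset_univ _)] at h
      exact dep_of_sum_zero A (Set.toFinite S).toFinset
        ((Set.Finite.toFinset_nonempty _).mpr hSne) hSsum S
        (by rw [Set.Finite.coe_toFinset]) h
    · intro D hDS
      by_contra hDdep
      have hdep : ¬ LinearIndependent (ZMod 2) (fun i : D => A i.1) := by
        intro h
        exact hDdep ((hM.2 D (Set.subset_univ _)).mpr h)
      obtain ⟨s', hs'D, hs'ne, hs'0⟩ := sum_zero_of_dep' A D hdep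
      have hS'S : (↑s' : Set α) ⊂ S := Set.ssubset_of_subset_of_ssubset hs'D hDS
      have hS'C : (↑s' : Set α) ⊂ C := hS'S.trans hSC
      have hodd1 := hodd _ hS'C (Finset.coe_nonempty.mpr hs'ne)
        (by rw [coe_fin]; exact hs'0)
      have hodd2 := hodd S hSC hSne hSsum
      have hS''ne : (S \ ↑s').Nonempty := by
        obtain ⟨x, hxS, hxD⟩ := Set.exists_of_ssubset hDS
        exact ⟨x, hxS, fun hx => hxD (hs'D hx)⟩
      have hS''C : (S \ ↑s') ⊂ C :=
        Set.ssubset_of_subset_of_ssubset Set.diff_subset hSC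
      have hS''sum : ∑ a ∈ (Set.toFinite (S \ ↑s')).toFinset, A a = 0 := by
        rw [sdiff_sum A hS'S.subset, hSsum, coe_fin, hs'0, sub_zero]
      have hodd3 := hodd _ hS''C hS''ne hS''sum
      rw [sdiff_sum χ hS'S.subset, hodd1, hodd2, sub_self] at hodd3
      exact zero_ne_one hodd3
  by_cases hcase : ∀ D ⊂ C, M.Indep D
  · left
    refine ⟨⟨by rw [hM.1]; exact Set.subset_univ _, ?_, hcase⟩, ?_⟩
    · intro h
      rw [hM.2 _ (Set.subset_univ _)] at h
      exact dep_of_sum_zero A (Set.toFinite C).toFinset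
        ((Set.Finite.toFinset_nonempty _).mpr hCne) hA0 C
        (by rw [Set.Finite.coe_toFinset]) h
    · rw [even_iff_cast, ← hpar, hχ0]
  · right
    push_neg at hcase
    obtain ⟨D, hDC, hDdep⟩ := hcase
    have hdep : ¬ LinearIndependent (ZMod 2) (fun i : D => A i.1) := by
      intro h
      exact hDdep ((hM.2 D (Set.subset_univ _)).mpr h)
    obtain ⟨s, hsD, hsne, hs0⟩ := sum_zero_of_dep' A D hdep
    have hC₁C : (↑s : Set α) ⊂ C := Set.ssubset_of_subset_of_ssubset hsD hDC
    have hC₁ne : (↑s : Set α).Nonempty := Finset.coe_nonempty.mpr hsne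
    have hC₁sum : ∑ a ∈ (Set.toFinite (↑s : Set α)).toFinset, A a = 0 := by
      rw [coe_fin]; exact hs0
    have hC₂ne : (C \ ↑s).Nonempty := by
      obtain ⟨x, hxC, hxC₁⟩ := Set.exists_of_ssubset hC₁C
      exact ⟨x, hxC, hxC₁⟩
    have hC₂C : (C \ ↑s) ⊂ C := by
      obtain ⟨x, hx⟩ := hC₁ne
      refine Set.ssubset_iff_subset_ne.mpr ⟨Set.diff_subset, fun h => ?_⟩
      have hxC : x ∈ C := hC₁C.subset hx
      rw [← h] at hxC
      exact hxC.2 hx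
    have hC₂sum : ∑ a ∈ (Set.toFinite (C \ ↑s)).toFinset, A a = 0 := by
      rw [sdiff_sum A hC₁C.subset, hA0, coe_fin, hs0, sub_zero]
    refine ⟨↑s, C \ ↑s, hcircS _ hC₁C hC₁ne hC₁sum, hcircS _ hC₂C hC₂ne hC₂sum,
      Set.disjoint_sdiff_right, (Set.union_diff_cancel hC₁C.subset).symm, ?_, ?_⟩
    · exact odd_of_cast_one (by rw [← hpar]; exact hodd _ hC₁C hC₁ne hC₁sum)
    · exact odd_of_cast_one (by rw [← hpar]; exact hodd _ hC₂C hC₂ne hC₂sum)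



end PaperSplit
end

section
/- Let M be a graphic matroid, T ⊆ E(M), and suppose the splitting matroid M_T has a minor isomorphic to a fixed matroid F. Then M has a minor N with T ⊆ E(N) and subsets T₁', T₂' of T with T₁' ∩ T₂' = ∅ such that N_T \ T₁' / T₂' ≅ F. In particular the witnessing deletions and contractions outside T can be pushed through the splitting operation. -/
open scoped Classical

namespace PaperSplit

variable {α β : Type}

/-! Everything happens at the level of `GF(2)` representations. Deleting columns commutes with
appending the row of `T`. If `C` is disjoint from `T`, the columns of `C` vanish in that row, so
contracting `C` — composing with a linear map whose kernel is spanned by those columns — can be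
done on the original rows alone. Hence, splitting `X = X' ∪ T₁` and `Y = Y' ∪ T₂` into parts
outside and inside `T`, the matroid `M_T ＼ X' ／ Y'` is the splitting matroid of
`N = M ＼ X' ／ Y'`, and `N_T ＼ T₁ ／ T₂ = M_T ＼ X ／ Y`. -/

open Set Submodule Matroid

universe u

theorem _root_.Submodule.exists_linearMap_ker_eq {K V : Type u} [DivisionRing K]
    [AddCommGroup V] [Module K V] (U : Submodule K V) :
    ∃ (ι : Type u) (f : V →ₗ[K] (ι → K)), LinearMap.ker f = U := by
  let b := Module.Free.chooseBasis K (V ⧸ U)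
  refine ⟨_, (Finsupp.lcoeFun ∘ₗ b.repr.toLinearMap) ∘ₗ U.mkQ, ?_⟩
  rw [LinearMap.ker_comp_of_ker_eq_bot, Submodule.ker_mkQ]
  exact LinearMap.ker_eq_bot.2 (DFunLike.coe_injective.comp b.repr.injective)

theorem _root_.LinearMap.linearIndepOn_comp_iff {K V W ι : Type*} [Ring K] [AddCommGroup V]
    [Module K V] [AddCommGroup W] [Module K W] (f : V →ₗ[K] W) {v : ι → V} {s : Set ι} :
    LinearIndepOn K (f ∘ v) s ↔
      LinearIndepOn K v s ∧ Disjoint (span K (v '' s)) (LinearMap.ker f) := by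
  rw [image_eq_range]
  exact ⟨fun h => ⟨h.of_comp f, Submodule.range_ker_disjoint h⟩, fun h => h.1.map h.2⟩

lemma del_eq_delete (M : Matroid α) (D : Set α) : del M D = M ＼ D := rfl

lemma con_eq_contract (M : Matroid α) (C : Set α) : con M C = M ／ C := rfl

section Representation

variable {η η' : Type} {A : α → η → ZMod 2} {E : Set α} {M : Matroid α}

lemma RepresentsOn.indep_iff (hA : RepresentsOn A E M) {I : Set α} (hI : I ⊆ M.E) :
    M.Indep I ↔ LinearIndepOn (ZMod 2) A I :=
  hA.2 I (hA.1 ▸ hI)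

lemma RepresentsOn.delete (hA : RepresentsOn A E M) (D : Set α) :
    RepresentsOn A (E \ D) (M ＼ D) := by
  refine ⟨by rw [delete_ground, hA.1], fun I hI => ?_⟩
  rw [delete_indep_iff, and_iff_left (disjoint_of_subset_left hI disjoint_sdiff_left)]
  exact hA.2 I (hI.trans sdiff_subset)

lemma RepresentsOn.span_image_eq_of_isBasis (hA : RepresentsOn A E M) {B C : Set α}
    (hB : M.IsBasis B C) : span (ZMod 2) (A '' B) = span (ZMod 2) (A '' C) := by
  refine le_antisymm (span_mono (image_mono hB.subset)) (span_le.2 ?_)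
  rintro _ ⟨c, hc, rfl⟩
  by_cases hcB : c ∈ B
  · exact subset_span (mem_image_of_mem A hcB)
  have hdep := hB.insert_dep ⟨hc, hcB⟩
  have hnot := hdep.not_indep
  rw [hA.indep_iff hdep.subset_ground, linearIndepOn_insert hcB] at hnot
  by_contra hnotin
  exact hnot ⟨(hA.indep_iff hB.indep.subset_ground).1 hB.indep, hnotin⟩

lemma RepresentsOn.contract (hA : RepresentsOn A E M) {C : Set α} (hC : C ⊆ E)
    (f : (η → ZMod 2) →ₗ[ZMod 2] (η' → ZMod 2))
    (hf : LinearMap.ker f = span (ZMod 2) (A '' C)) :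
    RepresentsOn (f ∘ A) (E \ C) (M ／ C) := by
  refine ⟨by rw [contract_ground, hA.1], fun I hI => ?_⟩
  obtain ⟨B, hB⟩ := M.exists_isBasis C (hA.1 ▸ hC)
  have hIB : Disjoint I B := disjoint_of_subset hI hB.subset disjoint_sdiff_left
  have hBindep : LinearIndepOn (ZMod 2) A B := (hA.indep_iff hB.indep.subset_ground).1 hB.indep
  show _ ↔ LinearIndepOn (ZMod 2) (f ∘ A) I
  rw [hB.contract_indep_iff, and_iff_left (disjoint_of_subset_right hI disjoint_sdiff_right),
    hA.indep_iff (union_subset (hA.1 ▸ hI.trans sdiff_subset) hB.indep.subset_ground),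
    linearIndepOn_union_iff hIB, f.linearIndepOn_comp_iff, hf,
    hA.span_image_eq_of_isBasis hB, and_iff_right hBindep]

end Representation

section SplitMap

variable {K : Type*} [Semiring K] {η η' : Type}

/-- The linear map acting as `f` on the original coordinates and fixing the appended one. -/
def splitMap (f : (η → K) →ₗ[K] (η' → K)) : (Option η → K) →ₗ[K] (Option η' → K) :=
  LinearMap.pi fun o => Option.elim o (LinearMap.proj none)
    fun i => LinearMap.proj i ∘ₗ f ∘ₗ LinearMap.funLeft K K some

def zeroExtend : (η → K) →ₗ[K] (Option η → K) :=
  LinearMap.pi fun o => Option.elim o 0 LinearMap.proj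

lemma ker_splitMap (f : (η → K) →ₗ[K] (η' → K)) :
    LinearMap.ker (splitMap f) = (LinearMap.ker f).map zeroExtend := by
  ext g
  constructor
  · intro hg
    refine ⟨g ∘ some, funext fun i => congrFun hg (some i), funext fun o => ?_⟩
    cases o with
    | none => exact (congrFun hg none).symm
    | some i => rfl
  · rintro ⟨v, hv, rfl⟩
    funext o
    cases o with
    | none => rfl
    | some i => exact congrFun hv i

lemma splitMap_comp_splitCols (f : (η → ZMod 2) →ₗ[ZMod 2] (η' → ZMod 2))
    (A : α → η → ZMod 2) (T : Set α) :
    splitMap f ∘ splitCols A T = splitCols (f ∘ A) T := by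
  funext a o
  cases o <;> rfl

lemma span_splitCols_image {A : α → η → ZMod 2} {T C : Set α} (hCT : Disjoint C T) :
    span (ZMod 2) (splitCols A T '' C) = (span (ZMod 2) (A '' C)).map zeroExtend := by
  rw [Submodule.map_span, ← image_comp]
  refine congrArg _ (image_congr fun c hc => funext fun o => ?_)
  cases o with
  | none => simp [splitCols, zeroExtend, disjoint_left.1 hCT hc]
  | some i => rfl

end SplitMap

section Splitting

variable {M MT : Matroid α} {T : Set α}

lemma IsSplitting.ground_eq (h : IsSplitting M T MT) : MT.E = M.E := by
  obtain ⟨_, _, _, hAT⟩ := h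
  exact hAT.1

lemma IsSplitting.delete (h : IsSplitting M T MT) (D : Set α) :
    IsSplitting (M ＼ D) T (MT ＼ D) := by
  obtain ⟨η, A, hA, hAT⟩ := h
  exact ⟨η, A, hA.delete D, hAT.delete D⟩

lemma IsSplitting.contract (h : IsSplitting M T MT) {C : Set α} (hCT : Disjoint C T) :
    IsSplitting (M ／ C) T (MT ／ C) := by
  wlog hC : C ⊆ M.E generalizing C
  · rw [← contract_inter_ground_eq M, ← contract_inter_ground_eq MT, h.ground_eq]
    exact this (hCT.mono_left inter_subset_left) inter_subset_right
  obtain ⟨η, A, hA, hAT⟩ := h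
  obtain ⟨ι, f, hf⟩ := (span (ZMod 2) (A '' C)).exists_linearMap_ker_eq
  have hATC := hAT.contract hC (splitMap f)
    (by rw [ker_splitMap, hf, span_splitCols_image hCT])
  rw [splitMap_comp_splitCols] at hATC
  exact ⟨ι, f ∘ A, hA.contract hC f hf, hATC⟩

end Splitting

theorem splitting_minor_pushthrough_general {α β : Type} (M MT : Matroid α) (F : Matroid β)
    (T : Set α)
    (hT : T ⊆ M.E) (hsplit : IsSplitting M T MT)
    (hminor : ∃ X Y, Disjoint X Y ∧ MIso (con (del MT X) Y) F) :
    ∃ N : Matroid α, IsMinorOf N M ∧ T ⊆ N.E ∧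
      ∃ T₁ T₂ : Set α, T₁ ⊆ T ∧ T₂ ⊆ T ∧ Disjoint T₁ T₂ ∧
        ∃ NT : Matroid α, IsSplitting N T NT ∧ MIso (con (del NT T₁) T₂) F := by
  obtain ⟨X, Y, hXY, hiso⟩ := hminor
  have hXT : Disjoint (X \ T) T := disjoint_sdiff_left
  have hYT : Disjoint (Y \ T) T := disjoint_sdiff_left
  refine ⟨M ＼ (X \ T) ／ (Y \ T), ⟨X \ T, Y \ T, hXY.mono sdiff_subset sdiff_subset, rfl⟩,
    subset_sdiff.2 ⟨subset_sdiff.2 ⟨hT, hXT.symm⟩, hYT.symm⟩,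
    X ∩ T, Y ∩ T, inter_subset_right, inter_subset_right,
    hXY.mono inter_subset_left inter_subset_left,
    MT ＼ (X \ T) ／ (Y \ T), (hsplit.delete _).contract hYT, ?_⟩
  rwa [del_eq_delete, con_eq_contract,
    contract_delete_comm _ (hYT.mono_right inter_subset_right), delete_delete, contract_contract,
    sdiff_union_inter, sdiff_union_inter]

/-- If `M` is graphic and `M_T` has a minor isomorphic to `F`, then
`M` has a minor `N` containing `T` and disjoint subsets `T₁', T₂'` of `T` with
`N_T \ T₁' / T₂' ≅ F`. -/
theorem splitting_minor_pushthrough {α β : Type} (M MT : Matroid α) (F : Matroid β)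
    (T : Set α)
    (hgr : IsGraphic M) (hT : T ⊆ M.E) (hsplit : IsSplitting M T MT)
    (hminor : ∃ X Y, Disjoint X Y ∧ MIso (con (del MT X) Y) F) :
    ∃ N : Matroid α, IsMinorOf N M ∧ T ⊆ N.E ∧
      ∃ T₁ T₂ : Set α, T₁ ⊆ T ∧ T₂ ⊆ T ∧ Disjoint T₁ T₂ ∧
        ∃ NT : Matroid α, IsSplitting N T NT ∧ MIso (con (del NT T₁) T₂) F :=
  splitting_minor_pushthrough_general M MT F T hT hsplit hminor

end PaperSplit
end

section
/- Let M be the cycle matroid of a graph G that contains a loop e. Then for any T ⊆ E(M) with |T| = 2, the splitting matroid M_T either is graphic or contains a loop. Specifically: if e ∉ T then e remains a loop of M_T; if e ∈ T, say T = {e, f}, then M_T ≅ M(G') where G' is obtained from G by an explicit graph modification, hence M_T is graphic. -/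
/-!
If `e ∉ T`, the zero column of the loop `e` stays zero in `A_T`. If `T = {e, f}`, the column of
`e` in `A_T` is the new unit vector, so a set `I ∋ e` is independent in `M_T` iff `I \ {e}` is
independent in `M`, and a set `I ∌ e` is independent iff `I \ {f}` is. Hence `M_T` can be
computed from the incidence matrix of `G`, and adding the new row to the row of an end `u` of
`f = uv` turns that matrix into the incidence matrix of the graph obtained from `G` by joining a
new vertex to `u` by `e` and to `v` by `f`.
-/

open scoped Classical

namespace PaperSplit

variable {α β : Type}

section LinearIndependence

variable {K ι V W : Type*} [Field K] [AddCommGroup V] [Module K V] [AddCommGroup W] [Module K W]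

theorem linearIndepOn_insert_iff_of_ker_eq_span {f : ι → V} {s : Set ι} {a : ι}
    {π : V →ₗ[K] W} (has : a ∉ s) (hfa : f a ≠ 0) (hπ : LinearMap.ker π = K ∙ f a) :
    LinearIndepOn K f (insert a s) ↔ LinearIndepOn K (π ∘ f) s := by
  rw [linearIndepOn_insert has, ← Submodule.disjoint_span_singleton' hfa, ← hπ]
  refine ⟨fun ⟨hs, hdisj⟩ ↦ (π.linearIndepOn_iff_of_injOn
    (LinearMap.injOn_of_disjoint_ker le_rfl hdisj)).2 hs, fun h ↦ ⟨h.of_comp π, ?_⟩⟩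
  simpa only [Set.image_eq_range] using Submodule.range_ker_disjoint (v := fun i : s ↦ f i) h

end LinearIndependence

section SplitColumns

variable {ι η : Type} {C : ι → η → ZMod 2} {T s I : Set ι} {e f : ι}

theorem span_splitCols_le_ker_proj_none (hs : Disjoint s T) :
    Submodule.span (ZMod 2) (splitCols C T '' s) ≤ LinearMap.ker (LinearMap.proj none) := by
  rw [Submodule.span_le]
  rintro _ ⟨a, ha, rfl⟩
  simp [splitCols, hs.notMem_of_mem_left ha]

theorem linearIndepOn_splitCols_iff_of_disjoint (hs : Disjoint s T) :
    LinearIndepOn (ZMod 2) (splitCols C T) s ↔ LinearIndepOn (ZMod 2) C s := by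
  refine ((LinearMap.funLeft (ZMod 2) (ZMod 2) some).linearIndepOn_iff_of_injOn
    (LinearMap.injOn_of_disjoint_ker (span_splitCols_le_ker_proj_none hs) ?_)).symm
  rw [Submodule.disjoint_def]
  intro x hnone hsome
  funext o
  cases o with
  | none => exact hnone
  | some a => exact congrFun hsome a

theorem linearIndepOn_splitCols_pair_of_notMem (he : e ∉ I) :
    LinearIndepOn (ZMod 2) (splitCols C {e, f}) I ↔ LinearIndepOn (ZMod 2) C (I \ {f}) := by
  have hdisj : Disjoint (I \ {f}) {e, f} := by
    rw [Set.disjoint_insert_right, Set.disjoint_singleton_right]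
    exact ⟨fun h ↦ he h.1, fun h ↦ h.2 rfl⟩
  rw [← linearIndepOn_splitCols_iff_of_disjoint hdisj]
  by_cases hf : f ∈ I
  · conv_lhs => rw [← Set.insert_sdiff_self_of_mem hf]
    rw [linearIndepOn_insert (fun h ↦ h.2 rfl), and_iff_left_iff_imp]
    intro _ hmem
    simpa [splitCols] using span_splitCols_le_ker_proj_none hdisj hmem
  · rw [Set.sdiff_singleton_eq_self hf]

theorem ker_funLeft_some :
    LinearMap.ker (LinearMap.funLeft (ZMod 2) (ZMod 2) (some : η → Option η)) =
      ZMod 2 ∙ Pi.single none 1 := by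
  ext x
  simp only [LinearMap.mem_ker, Submodule.mem_span_singleton]
  constructor
  · intro hx
    refine ⟨x none, funext fun o ↦ ?_⟩
    cases o with
    | none => simp
    | some a => simpa using (congrFun hx a).symm
  · rintro ⟨c, rfl⟩
    funext a
    simp [LinearMap.funLeft]

theorem linearIndepOn_splitCols_pair_of_mem (hCe : C e = 0) (he : e ∈ I) :
    LinearIndepOn (ZMod 2) (splitCols C {e, f}) I ↔ LinearIndepOn (ZMod 2) C (I \ {e}) := by
  have hcol : splitCols C {e, f} e = Pi.single none 1 := by
    funext o
    cases o with
    | none => simp [splitCols]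
    | some a => simp [splitCols, hCe]
  have h := linearIndepOn_insert_iff_of_ker_eq_span (f := splitCols C {e, f}) (s := I \ {e})
    (fun h ↦ h.2 rfl) (by simp [hcol]) (hcol ▸ ker_funLeft_some)
  rwa [Set.insert_sdiff_self_of_mem he] at h

end SplitColumns

section Representations

variable {ι η θ : Type} {A : ι → η → ZMod 2} {B : ι → θ → ZMod 2} {E T : Set ι}
  {M MT : Matroid ι} {e f : ι}

theorem representsOn_iff : RepresentsOn A E M ↔
    M.E = E ∧ ∀ I ⊆ E, (M.Indep I ↔ LinearIndepOn (ZMod 2) A I) :=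
  Iff.rfl

theorem RepresentsOn.isLoop_iff (hA : RepresentsOn A E M) (he : e ∈ E) :
    isLoop M e ↔ A e = 0 := by
  have hdep : ¬M.Indep {e} ↔ A e = 0 := by
    rw [(representsOn_iff.1 hA).2 {e} (Set.singleton_subset_iff.2 he),
      linearIndepOn_singleton_iff, not_not]
  refine ⟨fun h ↦ hdep.1 h.2.1, fun h ↦ ⟨hA.1 ▸ Set.singleton_subset_iff.2 he, hdep.2 h, ?_⟩⟩
  intro D hD
  rw [Set.ssubset_singleton_iff.1 hD]
  exact M.empty_indep

theorem splitCols_eq_zero (hAe : A e = 0) (he : e ∉ T) : splitCols A T e = 0 := by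
  funext o
  cases o with
  | none => simp [splitCols, he]
  | some a => simp [splitCols, hAe]

theorem RepresentsOn.splitCols_pair (hA : RepresentsOn A E M) (hB : RepresentsOn B E M)
    (hAe : A e = 0) (hBe : B e = 0) (hAT : RepresentsOn (splitCols A {e, f}) E MT) :
    RepresentsOn (splitCols B {e, f}) E MT := by
  rw [representsOn_iff] at hA hB hAT ⊢
  refine ⟨hAT.1, fun I hI ↦ ?_⟩
  rw [hAT.2 I hI]
  by_cases he : e ∈ I
  · rw [linearIndepOn_splitCols_pair_of_mem hAe he, linearIndepOn_splitCols_pair_of_mem hBe he,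
      ← hA.2 _ (Set.sdiff_subset.trans hI), hB.2 _ (Set.sdiff_subset.trans hI)]
  · rw [linearIndepOn_splitCols_pair_of_notMem he, linearIndepOn_splitCols_pair_of_notMem he,
      ← hA.2 _ (Set.sdiff_subset.trans hI), hB.2 _ (Set.sdiff_subset.trans hI)]

end Representations

section Graphs

variable {V E : Type}

theorem Multigraph.inc_eq_of_ends_eq (G : Multigraph V E) {a : E} {x y : V}
    (h : G.ends a = s(x, y)) : G.inc a = Pi.single x 1 + Pi.single y 1 := by
  funext w
  by_cases hx : w = x <;> by_cases hy : w = y <;>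
    simp [Multigraph.inc, h, Pi.single_apply, hx, hy, CharTwo.add_self_eq_zero] <;>
    grind

theorem Multigraph.exists_ends_eq (G : Multigraph V E) (a : E) : ∃ x y, G.ends a = s(x, y) :=
  Sym2.ind (f := fun z ↦ ∃ x y, z = s(x, y)) (fun x y ↦ ⟨x, y, rfl⟩) (G.ends a)

theorem single_add_single_self (x : V) : (Pi.single x 1 + Pi.single x 1 : V → ZMod 2) = 0 := by
  rw [← Pi.single_add, CharTwo.add_self_eq_zero, Pi.single_zero]

theorem Multigraph.inc_eq_zero_of_isDiag (G : Multigraph V E) {a : E} (h : (G.ends a).IsDiag) :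
    G.inc a = 0 := by
  obtain ⟨x, y, hxy⟩ := G.exists_ends_eq a
  rw [hxy, Sym2.mk_isDiag_iff] at h
  rw [G.inc_eq_of_ends_eq hxy, h, single_add_single_self]

theorem IsCycleMatroidOf.isGraphic {G : Multigraph V E} {M : Matroid E}
    (hM : IsCycleMatroidOf G M) : IsGraphic M := by
  refine ⟨V, G.inc, hM.1 ▸ hM, fun a _ ↦ ?_⟩
  obtain ⟨x, y, hxy⟩ := G.exists_ends_eq a
  rw [G.inc_eq_of_ends_eq hxy]
  by_cases h : x = y
  · exact .inl (h ▸ single_add_single_self x)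
  · exact .inr ⟨x, y, h, funext fun w ↦ by simp [Pi.single_apply]⟩

noncomputable def addNoneRowTo (u : V) : (Option V → ZMod 2) →ₗ[ZMod 2] (Option V → ZMod 2) :=
  LinearMap.id + LinearMap.single (ZMod 2) (fun _ ↦ ZMod 2) (some u) ∘ₗ LinearMap.proj none

theorem addNoneRowTo_apply (u : V) (x : Option V → ZMod 2) :
    addNoneRowTo u x = x + Pi.single (some u) (x none) :=
  rfl

theorem addNoneRowTo_involutive (u : V) : Function.Involutive (addNoneRowTo u) := by
  intro x
  simp [addNoneRowTo_apply, add_assoc, CharTwo.add_self_eq_zero]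

noncomputable def Multigraph.splitPair (G : Multigraph V E) (e f : E) (u v : V) :
    Multigraph (Option V) E where
  ends g := if g = e then s(none, some u) else if g = f then s(none, some v)
    else (G.ends g).map some

theorem Multigraph.inc_splitPair (G : Multigraph V E) {e f : E} {u v : V}
    (he : (G.ends e).IsDiag) (hf : G.ends f = s(u, v)) :
    (G.splitPair e f u v).inc = addNoneRowTo u ∘ splitCols G.inc {e, f} := by
  funext g
  rw [Function.comp_apply]
  by_cases hge : g = e
  · subst hge
    rw [inc_eq_of_ends_eq _ (if_pos rfl)]
    funext o
    cases o <;> simp [addNoneRowTo_apply, splitCols, G.inc_eq_zero_of_isDiag he, Pi.single_apply]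
  by_cases hgf : g = f
  · subst hgf
    have hends : (G.splitPair e g u v).ends g = s(none, some v) := by simp [splitPair, hge]
    rw [inc_eq_of_ends_eq _ hends]
    funext o
    cases o with
    | none => simp [addNoneRowTo_apply, splitCols]
    | some w =>
      simp only [addNoneRowTo_apply, splitCols, G.inc_eq_of_ends_eq hf, Pi.add_apply,
        Pi.single_apply, Option.some.injEq, reduceCtorEq, Set.mem_insert_iff,
        Set.mem_singleton_iff, or_true, ↓reduceIte, Option.elim_none, Option.elim_some, zero_add]
      split_ifs <;> decide
  obtain ⟨x, y, hxy⟩ := G.exists_ends_eq g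
  have hends : (G.splitPair e f u v).ends g = s(some x, some y) := by
    simp [splitPair, hge, hgf, hxy]
  rw [inc_eq_of_ends_eq _ hends]
  funext o
  cases o <;> simp [addNoneRowTo_apply, splitCols, hge, hgf, G.inc_eq_of_ends_eq hxy,
    Pi.single_apply]

theorem IsCycleMatroidOf.splitPair {G : Multigraph V E} {MT : Matroid E} {e f : E} {u v : V}
    (he : (G.ends e).IsDiag) (hf : G.ends f = s(u, v))
    (hMT : RepresentsOn (splitCols G.inc {e, f}) Set.univ MT) :
    IsCycleMatroidOf (G.splitPair e f u v) MT := by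
  refine representsOn_iff.2 ⟨hMT.1, fun I hI ↦ ?_⟩
  rw [(representsOn_iff.1 hMT).2 I hI, G.inc_splitPair he hf,
    (addNoneRowTo u).linearIndepOn_iff_of_injOn (addNoneRowTo_involutive u).injective.injOn]

end Graphs

theorem exists_eq_pair_of_ncard_eq_two {T : Set α} {e : α} (hT : T.ncard = 2) (he : e ∈ T) :
    ∃ f, T = {e, f} := by
  obtain ⟨x, y, -, rfl⟩ := Set.ncard_eq_two.1 hT
  rcases he with rfl | rfl
  exacts [⟨y, rfl⟩, ⟨x, Set.pair_comm _ _⟩]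

/-- If `M = M(G)` and `G` has a loop `e`, then for `|T| = 2` the
splitting matroid `M_T` either is graphic or has a loop: if `e ∉ T` then `e`
remains a loop of `M_T`; if `e ∈ T` then `M_T` is graphic. -/
theorem splitting_with_loop {V E : Type} (G : Multigraph V E) (M MT : Matroid E)
    (e : E) (T : Set E)
    (hM : IsCycleMatroidOf G M) (hloop : (G.ends e).IsDiag)
    (hT : T.ncard = 2) (hsplit : IsSplitting M T MT) :
    (IsGraphic MT ∨ ∃ f, isLoop MT f) ∧
      (e ∉ T → isLoop MT e) ∧ (e ∈ T → IsGraphic MT) := by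
  unfold IsCycleMatroidOf at hM
  obtain ⟨η, A, hA, hAT⟩ := hsplit
  rw [hM.1] at hA hAT
  have hGe : G.inc e = 0 := G.inc_eq_zero_of_isDiag hloop
  have hAe : A e = 0 :=
    (hA.isLoop_iff (Set.mem_univ e)).1 ((hM.isLoop_iff (Set.mem_univ e)).2 hGe)
  have hloopT : e ∉ T → isLoop MT e := fun heT ↦
    (hAT.isLoop_iff (Set.mem_univ e)).2 (splitCols_eq_zero hAe heT)
  have hgraphicT : e ∈ T → IsGraphic MT := by
    intro heT
    obtain ⟨f, rfl⟩ := exists_eq_pair_of_ncard_eq_two hT heT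
    obtain ⟨u, v, hf⟩ := G.exists_ends_eq f
    exact (IsCycleMatroidOf.splitPair hloop hf (hA.splitCols_pair hM hAe hGe hAT)).isGraphic
  refine ⟨?_, hloopT, hgraphicT⟩
  by_cases heT : e ∈ T
  exacts [.inl (hgraphicT heT), .inr ⟨e, hloopT heT⟩]

end PaperSplit
end
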